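/- Consider an additive noise model Z_ℓ = f_ℓ(Z_{Pa(ℓ)}) + N_ℓ where N_ℓ has a twice-differentiable, strictly positive density p_N on ℝ with score r(u) = (log p_N)'(u), and f_ℓ is differentiable with ∂f_ℓ/∂z_k not identically zero for some k ∈ Pa(ℓ). Then the conditional density p_ℓ(z_ℓ | z_{Pa(ℓ)}) = p_N(z_ℓ − f_ℓ(z_{Pa(ℓ)})) satisfies: the mixed partial ∂² log p_ℓ(z_ℓ|z_{Pa(ℓ)}) / (∂z_ℓ ∂z_k) cannot be identically zero in (z_ℓ, z_{Pa(ℓ)}). -/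

import Mathlib

/-!
Along the `k₀`-th coordinate the conditional log-density is `log p_N (u - g t)`, so its mixed
partial is `-g'(t) · r'(u - g t)` with `r = (log p_N)'` the score. At a point where `g' ≠ 0`,
letting `u` range over `ℝ` shows that identical vanishing forces `r' ≡ 0`, i.e. `log p_N` is
affine and `p_N u = a · exp (c u)`. No such function has integral `1`: translating by `1`
multiplies the integral by `exp c`, so either the integral is `0` or `c = 0`, and a constant
has integral `0` on `ℝ` because Lebesgue measure is infinite.
-/

open Real MeasureTheory

theorem deriv_deriv_comp_sub {φ g : ℝ → ℝ} (hφ : Differentiable ℝ φ) {x : ℝ}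
    (hg : DifferentiableAt ℝ g x) (z : ℝ) :
    deriv (fun u => deriv (fun t => φ (u - g t)) x) z =
      deriv (deriv φ) (z - g x) * -deriv g x := by
  have inner (u : ℝ) : deriv (fun t => φ (u - g t)) x = deriv φ (u - g x) * -deriv g x :=
    ((hφ _).hasDerivAt.comp x (hg.hasDerivAt.const_sub u)).deriv
  simp only [inner, deriv_mul_const_field, deriv_comp_sub_const]

theorem eq_add_mul_of_deriv_deriv_eq_zero {f : ℝ → ℝ} (hf : ContDiff ℝ 2 f)
    (h : ∀ x, deriv (deriv f) x = 0) (x : ℝ) : f x = f 0 + deriv f 0 * x := by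
  obtain ⟨hf₁, -, hf₂⟩ := (contDiff_succ_iff_deriv (n := 1)).mp hf
  have hderiv (y : ℝ) : HasDerivAt (fun y => f y - deriv f 0 * y) 0 y := by
    have hf'_const := is_const_of_deriv_eq_zero (hf₂.differentiable one_ne_zero) h y 0
    have := (hf₁ y).hasDerivAt.sub ((hasDerivAt_id' y).const_mul (deriv f 0))
    rwa [hf'_const, mul_one, sub_self] at this
  have := is_const_of_deriv_eq_zero (fun y => (hderiv y).differentiableAt)
    (fun y => (hderiv y).deriv) x 0
  simp only [mul_zero, sub_zero] at this
  linarith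

theorem integral_mul_exp_mul (a c : ℝ) : ∫ u, a * exp (c * u) = 0 := by
  set I := ∫ u, a * exp (c * u)
  have hshift : I = exp c * I := by
    calc I = ∫ u, a * exp (c * (u + 1)) :=
          (integral_add_right_eq_self (fun u => a * exp (c * u)) 1).symm
      _ = ∫ u, exp c * (a * exp (c * u)) := by
          congr 1 with u; rw [mul_add, mul_one, exp_add]; ring
      _ = exp c * I := integral_const_mul _ _
  rcases mul_eq_zero.mp (show (exp c - 1) * I = 0 by linarith) with hc | hI
  · have : c = 0 := by rwa [sub_eq_zero, exp_eq_one_iff] at hc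
    simp [I, this, integral_const, measureReal_def]
  · exact hI

theorem mixed_partial_not_identically_zero_general {k : ℕ}
    (fℓ : (Fin k → ℝ) → ℝ) (k₀ : Fin k)
    (pN : ℝ → ℝ) (hpN : ∀ u, 0 < pN u) (hpNs : ContDiff ℝ 2 pN)
    (hpNi : ∫ u, pN u = 1)
    (hfk : ¬ ∀ w : Fin k → ℝ,
      deriv (fun t => fℓ (Function.update w k₀ t)) (w k₀) = 0) :
    ¬ ∀ (zℓ : ℝ) (w : Fin k → ℝ),
      deriv (fun u =>
        deriv (fun t => Real.log (pN (u - fℓ (Function.update w k₀ t)))) (w k₀))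
        zℓ = 0 := by
  intro H
  push Not at hfk
  obtain ⟨w, hw⟩ := hfk
  have hlog : ContDiff ℝ 2 (fun u => log (pN u)) := hpNs.log fun u => (hpN u).ne'
  have hscore_deriv (v : ℝ) : deriv (deriv fun u => log (pN u)) v = 0 := by
    have := H (v + fℓ w) w
    rw [deriv_deriv_comp_sub (hlog.differentiable two_ne_zero)
      (differentiableAt_of_deriv_ne_zero hw), Function.update_eq_self, add_sub_cancel_right] at this
    exact (mul_eq_zero.mp this).resolve_right (neg_ne_zero.mpr hw)
  have hexp (u : ℝ) : pN u = pN 0 * exp (deriv (fun u => log (pN u)) 0 * u) := by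
    rw [← exp_log (hpN u), eq_add_mul_of_deriv_deriv_eq_zero hlog hscore_deriv u, exp_add,
      exp_log (hpN 0)]
  rw [funext hexp, integral_mul_exp_mul] at hpNi
  exact zero_ne_one hpNi

/-- Additive noise model `Z_ℓ = f_ℓ(Z_{Pa(ℓ)}) + N_ℓ` with twice-differentiable strictly
positive noise density `p_N` integrating to 1, and `f_ℓ` whose partial derivative in
coordinate `k₀` is not identically zero. Then the mixed partial
`∂² log p_ℓ(z_ℓ | z_{Pa(ℓ)}) / (∂z_ℓ ∂z_{k₀})` of the conditional log-density
`log p_N(z_ℓ − f_ℓ(z_{Pa(ℓ)}))` cannot vanish identically. -/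
theorem mixed_partial_not_identically_zero {k : ℕ}
    (fℓ : (Fin k → ℝ) → ℝ) (k₀ : Fin k) (hf : Differentiable ℝ fℓ)
    (pN : ℝ → ℝ) (hpN : ∀ u, 0 < pN u) (hpNs : ContDiff ℝ 2 pN)
    (hpNi : ∫ u, pN u = 1)
    (hfk : ¬ ∀ w : Fin k → ℝ,
      deriv (fun t => fℓ (Function.update w k₀ t)) (w k₀) = 0) :
    ¬ ∀ (zℓ : ℝ) (w : Fin k → ℝ),
      deriv (fun u =>
        deriv (fun t => Real.log (pN (u - fℓ (Function.update w k₀ t)))) (w k₀))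
        zℓ = 0 :=
  mixed_partial_not_identically_zero_general fℓ k₀ pN hpN hpNs hpNi hfk
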